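/- Let X, Y, Z be metric spaces, f a multifunction from X to Y and g a multifunction from Y to Z. If f and g are both Henkin-continuous, then the composition g ∘ f is Henkin-continuous. -/
import Mathlib


/-- Composition of multifunctions. -/
def MComp {X Y Z : Type*} (g : Y → Set Z) (f : X → Set Y) : X → Set Z :=
  fun x => {z | f x ⊆ {y | (g y).Nonempty} ∧ ∃ y ∈ f x, z ∈ g y}

/-- Henkin-continuity of a multifunction between metric spaces: a modulus `δ`
depending only on `ε` and a choice `y x ∈ f x` depending only on `x`. -/
def HenkinContinuous {X Y : Type*} [MetricSpace X] [MetricSpace Y] (f : X → Set Y) : Prop :=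
  ∃ δ : ℝ → ℝ, ∃ y : X → Y,
    (∀ ε > (0:ℝ), δ ε > 0) ∧
    (∀ x, (f x).Nonempty → y x ∈ f x) ∧
    (∀ ε > (0:ℝ), ∀ x, (f x).Nonempty → ∀ x', (f x').Nonempty →
      dist x x' < δ ε → ∃ y' ∈ f x', dist (y x) y' < ε)

/-- The composition of Henkin-continuous multifunctions is Henkin-continuous. -/
theorem henkin_comp {X Y Z : Type*} [MetricSpace X] [MetricSpace Y] [MetricSpace Z]
    (f : X → Set Y) (g : Y → Set Z)
    (hf : HenkinContinuous f) (hg : HenkinContinuous g) :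
    HenkinContinuous (MComp g f) := by
  obtain ⟨δf, yf, hδf, hyf, hcf⟩ := hf
  obtain ⟨δg, yg, hδg, hyg, hcg⟩ := hg
  refine ⟨fun ε => δf (δg ε), fun x => yg (yf x), fun ε hε => hδf _ (hδg ε hε), ?_, ?_⟩
  · rintro x ⟨z, hsub, y, hy, hz⟩
    have hfx : (f x).Nonempty := ⟨y, hy⟩
    have hyfx := hyf x hfx
    exact ⟨hsub, yf x, hyfx, hyg _ (hsub hyfx)⟩
  · rintro ε hε x ⟨z, hsub, y, hy, hz⟩ x' ⟨z', hsub', y'', hy'', hz''⟩ hd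
    have hfx : (f x).Nonempty := ⟨y, hy⟩
    have hfx' : (f x').Nonempty := ⟨y'', hy''⟩
    obtain ⟨y', hy', hdy⟩ := hcf (δg ε) (hδg ε hε) x hfx x' hfx' hd
    obtain ⟨w, hw, hdw⟩ := hcg ε hε (yf x) (hsub (hyf x hfx)) y' (hsub' hy') hdy
    exact ⟨w, ⟨hsub', y', hy', hw⟩, hdw⟩
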